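/- Let {λ_n} be a nested sequence of Young diagrams with |λ_n| = n, and suppose λ_N has at least k+1 rows for some N. Then for all i ≤ k and n ≥ N, the set of degree-i monomials in the Garsia-Procesi basis B(λ_n) equals the set of degree-i monomials in B(col_n), namely all monomials x_2^{a_2} ⋯ x_n^{a_n} of total degree i with 0 ≤ a_j ≤ j−1. In particular the number of degree-i monomials in B(λ_n) equals the number of permutations of {1,...,n} with exactly i inversions. -/

import Mathlib

open MvPolynomial

/-- Delete the rightmost box of (0-indexed) row `i` of `l`, drop empty rows, and re-sort
into weakly decreasing order. -/
def gpStep (l : List ℕ) (i : ℕ) : List ℕ :=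
  ((l.set i (l.getD i 0 - 1)).filter (fun x => x ≠ 0)).insertionSort (· ≥ ·)

/-- Auxiliary recursion for the Garsia-Procesi basis, with fuel equal to the number of boxes. -/
noncomputable def gpAux : ℕ → List ℕ → Set (MvPolynomial ℕ ℚ)
  | 0, _ => {1}
  | (n + 1), l => ⋃ i ∈ Finset.range l.length,
      (fun p => (X (n + 1) : MvPolynomial ℕ ℚ) ^ i * p) '' gpAux n (gpStep l i)

/-- The Garsia-Procesi basis `B(λ)`: `B((1)) = {1}` and
`B(λ) = ⋃_{i=1}^k x_n^{i-1} B(λ_i)` where `λ_i` is `λ` with the rightmost box of row `i`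
removed and rows re-sorted. -/
noncomputable def gpBasis (l : List ℕ) : Set (MvPolynomial ℕ ℚ) := gpAux l.sum l

/-- `l` is a partition of `n`: weakly decreasing, positive parts, total `n`. -/
def IsPartitionOf (n : ℕ) (l : List ℕ) : Prop :=
  l.Pairwise (· ≥ ·) ∧ (∀ x ∈ l, 0 < x) ∧ l.sum = n

/-!
An element of `B(λ)` is `x_n^e · q` with `e < ℓ(λ) ≤ n` and `q ∈ B(λ_e)`, so by induction
`B(λ)` consists of Artin monomials `x_1^{c_0} ⋯ x_n^{c_{n-1}}` with `c_j ≤ j`. Conversely, an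
Artin monomial lies in `B(λ)` if its degree is `< ℓ(λ)` or `λ` is a column: peel off `x_n^e`
with `e = c_{n-1}`. Removing a box from row `e` shortens `λ` by at most one row, and by none if
`e = 0` unless `λ` is a column; so the degree bound passes to `λ_e`, and columns stay columns. Since nested diagrams only
grow, `ℓ(λ_n) ≥ ℓ(λ_N) > k ≥ i`.

For the count, the Lehmer code `w ↦ (#{i < j | w j < w i})_j` maps permutations injectively to the
sequences with `c_j ≤ j`, hence bijectively as both sets have `n!` elements, and it carries the
number of inversions to the degree.
-/

open Finset Function

section Diagrams

variable {l : List ℕ} {i : ℕ}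

lemma filter_ne_zero_set (hpos : ∀ x ∈ l, 0 < x) (hi : i < l.length) (v : ℕ) :
    (l.set i v).filter (· ≠ 0) = l.take i ++ [v].filter (· ≠ 0) ++ l.drop (i + 1) := by
  have hfix : ∀ l' : List ℕ, l' ⊆ l → l'.filter (· ≠ 0) = l' := fun l' h =>
    List.filter_eq_self.2 fun x hx => by simpa using (hpos x (h hx)).ne'
  rw [List.set_eq_take_append_cons_drop, if_pos hi, ← List.singleton_append,
    List.filter_append, List.filter_append, hfix _ (List.take_subset _ _),
    hfix _ (List.drop_subset _ _), List.append_assoc]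

lemma gpStep_perm (hpos : ∀ x ∈ l, 0 < x) (hi : i < l.length) :
    (gpStep l i).Perm (l.take i ++ [l[i] - 1].filter (· ≠ 0) ++ l.drop (i + 1)) := by
  rw [gpStep, List.getD_eq_getElem _ _ hi, ← filter_ne_zero_set hpos hi]
  exact List.perm_insertionSort _ _

lemma sum_gpStep (hpos : ∀ x ∈ l, 0 < x) (hi : i < l.length) :
    (gpStep l i).sum + 1 = l.sum := by
  have hsplit := List.sum_set l i l[i]
  rw [List.set_getElem_self, if_pos hi] at hsplit
  have := hpos _ (l.getElem_mem hi)
  rw [(gpStep_perm hpos hi).sum_eq, List.sum_append, List.sum_append, hsplit]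
  by_cases h : l[i] - 1 = 0 <;> simp [h] <;> omega

lemma length_gpStep (hpos : ∀ x ∈ l, 0 < x) (hi : i < l.length) :
    (gpStep l i).length = if l[i] = 1 then l.length - 1 else l.length := by
  have := hpos _ (l.getElem_mem hi)
  rw [(gpStep_perm hpos hi).length_eq]
  have hsub : l[i] - 1 = 0 ↔ l[i] = 1 := by omega
  by_cases h : l[i] = 1 <;> simp [h, hsub] <;> omega

lemma pos_of_mem_gpStep {x : ℕ} (hx : x ∈ gpStep l i) : 0 < x := by
  have := List.of_mem_filter ((List.perm_insertionSort _ _).mem_iff.1 hx)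
  simp only [ne_eq, decide_eq_true_eq] at this
  omega

lemma IsPartitionOf.gpStep {m : ℕ} (hl : IsPartitionOf (m + 1) l) (hi : i < l.length) :
    IsPartitionOf m (gpStep l i) :=
  ⟨List.pairwise_insertionSort _ _, fun _ => pos_of_mem_gpStep,
    by have := sum_gpStep hl.2.1 hi; have := hl.2.2; omega⟩

lemma IsPartitionOf.length_le {n : ℕ} (hl : IsPartitionOf n l) : l.length ≤ n :=
  hl.2.2 ▸ List.length_le_sum_of_one_le l hl.2.1

lemma IsPartitionOf.length_eq_of_getElem_zero {n : ℕ} (hl : IsPartitionOf n l)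
    (h0 : 0 < l.length) (h : l[0] = 1) : l.length = n := by
  obtain ⟨hsort, hpos, rfl⟩ := hl
  refine le_antisymm (List.length_le_sum_of_one_le l hpos) ?_
  obtain ⟨a, t, rfl⟩ := List.exists_cons_of_length_pos h0
  have : ∀ x ∈ a :: t, x ≤ 1 := by
    simp only [List.mem_cons, forall_eq_or_imp]
    exact ⟨h ▸ le_rfl, fun x hx => h ▸ (List.pairwise_cons.1 hsort).1 x hx⟩
  simpa using List.sum_le_card_nsmul _ 1 this

lemma length_le_length_of_getD_le {l l' : List ℕ} (hpos : ∀ x ∈ l, 0 < x)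
    (h : ∀ j, l.getD j 0 ≤ l'.getD j 0) : l.length ≤ l'.length := by
  by_contra! hlt
  have := h l'.length
  rw [List.getD_eq_default _ _ le_rfl, List.getD_eq_getElem _ _ hlt] at this
  exact (hpos _ (l.getElem_mem hlt)).ne' (Nat.le_zero.1 this)

end Diagrams

noncomputable def artinMonomial (n : ℕ) (c : ℕ → ℕ) : MvPolynomial ℕ ℚ :=
  ∏ j ∈ range n, X (j + 1) ^ c j

def artinMonomials (n i : ℕ) : Set (MvPolynomial ℕ ℚ) :=
  {p | ∃ c : ℕ → ℕ, (∀ j < n, c j ≤ j) ∧ ∑ j ∈ range n, c j = i ∧ p = artinMonomial n c}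

section ArtinMonomial

variable {n : ℕ} {c c' : ℕ → ℕ}

lemma artinMonomial_zero (c : ℕ → ℕ) : artinMonomial 0 c = 1 := prod_range_zero _

lemma artinMonomial_succ (m : ℕ) (c : ℕ → ℕ) :
    artinMonomial (m + 1) c = X (m + 1) ^ c m * artinMonomial m c := by
  rw [artinMonomial, prod_range_succ, mul_comm, artinMonomial]

lemma artinMonomial_congr (h : ∀ j < n, c j = c' j) : artinMonomial n c = artinMonomial n c' :=
  prod_congr rfl fun j hj => by rw [h j (mem_range.1 hj)]

lemma artinMonomial_eq_monomial (n : ℕ) (c : ℕ → ℕ) :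
    artinMonomial n c = monomial (∑ j ∈ range n, Finsupp.single (j + 1) (c j)) 1 := by
  simp [artinMonomial, monomial_sum_one, X_pow_eq_monomial]

lemma totalDegree_artinMonomial (n : ℕ) (c : ℕ → ℕ) :
    (artinMonomial n c).totalDegree = ∑ j ∈ range n, c j := by
  rw [artinMonomial_eq_monomial, totalDegree_monomial _ one_ne_zero,
    ← Finsupp.sum_finsetSum_index (fun _ => rfl) (fun _ _ _ => rfl)]
  simp

lemma degreeOf_artinMonomial {j : ℕ} (hj : j < n) (c : ℕ → ℕ) :
    degreeOf (j + 1) (artinMonomial n c) = c j := by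
  rw [artinMonomial_eq_monomial, degreeOf_monomial_eq _ _ one_ne_zero, Finsupp.finsetSum_apply]
  simp [Finsupp.single_apply, hj]

lemma artinMonomial_inj (h : artinMonomial n c = artinMonomial n c') : ∀ j < n, c j = c' j :=
  fun j hj => by rw [← degreeOf_artinMonomial hj c, h, degreeOf_artinMonomial hj]

end ArtinMonomial

@[to_additive]
lemma prod_Icc_two_succ {M : Type*} [CommMonoid M] (f : ℕ → M) (m : ℕ) :
    ∏ j ∈ Icc 2 (m + 1), f j = ∏ j ∈ range m, f (j + 2) := by
  rw [range_eq_Ico, prod_Ico_add', ← Ico_add_one_right_eq_Icc, zero_add]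
  rfl

lemma artinMonomials_eq_Icc (n i : ℕ) :
    artinMonomials n i = {p | ∃ a : ℕ → ℕ, (∀ j ∈ Icc 2 n, a j ≤ j - 1) ∧
      ∑ j ∈ Icc 2 n, a j = i ∧ p = ∏ j ∈ Icc 2 n, X j ^ a j} := by
  rcases n with _ | m
  · simp [artinMonomials, artinMonomial_zero]
  ext p
  constructor
  · rintro ⟨c, hc, rfl, rfl⟩
    have hc0 : c 0 = 0 := Nat.le_zero.1 (hc 0 m.succ_pos)
    refine ⟨fun j => c (j - 1), fun j hj => hc _ (by simp at hj; omega), ?_, ?_⟩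
    · simp [sum_range_succ', sum_Icc_two_succ, hc0]
    · simp [artinMonomial, prod_range_succ', prod_Icc_two_succ, hc0]
  · rintro ⟨a, ha, rfl, rfl⟩
    refine ⟨fun j => if j = 0 then 0 else a (j + 1), fun j hj => ?_, ?_, ?_⟩
    · dsimp only
      split_ifs with hj0
      · omega
      · simpa using ha (j + 1) (by simp; omega)
    · simp [sum_range_succ', sum_Icc_two_succ]
    · simp [artinMonomial, prod_range_succ', prod_Icc_two_succ]

lemma mem_gpAux_succ {m : ℕ} {l : List ℕ} {p : MvPolynomial ℕ ℚ} :
    p ∈ gpAux (m + 1) l ↔ ∃ i < l.length, ∃ q ∈ gpAux m (gpStep l i), X (m + 1) ^ i * q = p := by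
  simp [gpAux]

lemma exists_artinMonomial_of_mem_gpAux (m : ℕ) {l : List ℕ} (hpos : ∀ x ∈ l, 0 < x)
    (hsum : l.sum = m) {p : MvPolynomial ℕ ℚ} (hp : p ∈ gpAux m l) :
    ∃ c : ℕ → ℕ, (∀ j < m, c j ≤ j) ∧ p = artinMonomial m c := by
  induction m generalizing l p with
  | zero => exact ⟨0, by simp, by simpa [gpAux, artinMonomial_zero] using hp⟩
  | succ m ih =>
    obtain ⟨e, he, q, hq, rfl⟩ := mem_gpAux_succ.1 hp
    obtain ⟨c, hc, rfl⟩ := ih (fun _ => pos_of_mem_gpStep)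
      (by have := sum_gpStep hpos he; omega) hq
    have hlen : l.length ≤ m + 1 := hsum ▸ List.length_le_sum_of_one_le l hpos
    refine ⟨update c m e, fun j hj => ?_, ?_⟩
    · rcases eq_or_ne j m with rfl | hne
      · rw [update_self]; omega
      · rw [update_of_ne hne]; exact hc j (by omega)
    · rw [artinMonomial_succ, update_self,
        artinMonomial_congr (c := update c m e) fun j hj => update_of_ne hj.ne _ _]

lemma artinMonomial_mem_gpAux (m : ℕ) {l : List ℕ} (hl : IsPartitionOf m l) {c : ℕ → ℕ}
    (hc : ∀ j < m, c j ≤ j) (hlen : ∑ j ∈ range m, c j < l.length ∨ l.length = m) :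
    artinMonomial m c ∈ gpAux m l := by
  induction m generalizing l with
  | zero => simp [gpAux, artinMonomial_zero]
  | succ m ih =>
    rw [sum_range_succ] at hlen
    have hcm := hc m m.lt_succ_self
    have he : c m < l.length := by omega
    rw [artinMonomial_succ, mem_gpAux_succ]
    refine ⟨c m, he, _, ih (hl.gpStep he) (fun j hj => hc j (by omega)) ?_, rfl⟩
    have hstep := length_gpStep hl.2.1 he
    have hle := (hl.gpStep he).length_le
    by_cases hcol : l.length = m + 1
    · right; split_ifs at hstep <;> omega
    · left
      rcases Nat.eq_zero_or_pos (c m) with h0 | hpos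
      · have hrow : l[c m] ≠ 1 := fun h1 =>
          hcol (hl.length_eq_of_getElem_zero (by omega) (by simpa [h0] using h1))
        rw [if_neg hrow] at hstep
        omega
      · split_ifs at hstep <;> omega

lemma setOf_totalDegree_gpBasis {n i : ℕ} {l : List ℕ} (hl : IsPartitionOf n l)
    (hi : i < l.length) : {p ∈ gpBasis l | p.totalDegree = i} = artinMonomials n i := by
  rw [gpBasis, hl.2.2]
  ext p
  constructor
  · rintro ⟨hp, rfl⟩
    obtain ⟨c, hc, rfl⟩ := exists_artinMonomial_of_mem_gpAux n hl.2.1 hl.2.2 hp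
    exact ⟨c, hc, (totalDegree_artinMonomial n c).symm, rfl⟩
  · rintro ⟨c, hc, rfl, rfl⟩
    exact ⟨artinMonomial_mem_gpAux n hl hc (.inl hi), totalDegree_artinMonomial n c⟩

lemma card_filter_lt_injOn {α : Type*} [LinearOrder α] (s : Finset α) :
    Set.InjOn (fun x => #{y ∈ s | x < y}) s := by
  intro x hx y hy h
  by_contra hne
  wlog hxy : x < y generalizing x y
  · exact this hy hx h.symm (Ne.symm hne) (lt_of_le_of_ne (not_lt.1 hxy) (Ne.symm hne))
  have hss : {z ∈ s | y < z} ⊂ {z ∈ s | x < z} :=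
    (ssubset_iff_of_subset (monotone_filter_right _ fun _ _ => hxy.trans)).2
      ⟨y, by simp [mem_coe.1 hy, hxy]⟩
  exact (card_lt_card hss).ne' h

namespace Equiv.Perm

variable {n : ℕ}

def inversions (w : Perm (Fin n)) : Finset (Fin n × Fin n) :=
  {q | q.1 < q.2 ∧ w q.2 < w q.1}

def lehmerCode (w : Perm (Fin n)) (j : Fin n) : ℕ :=
  #{i | i < j ∧ w j < w i}

lemma lehmerCode_le (w : Perm (Fin n)) (j : Fin n) : w.lehmerCode j ≤ j :=
  (card_le_card fun _ hi => mem_Iio.2 (mem_filter.1 hi).2.1).trans (Fin.card_Iio j).le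

lemma sum_lehmerCode (w : Perm (Fin n)) : ∑ j, w.lehmerCode j = #w.inversions := by
  simp only [lehmerCode, inversions, card_filter, Fintype.sum_prod_type]
  exact sum_comm

lemma lehmerCode_eq_card (w : Perm (Fin n)) (j : Fin n) :
    w.lehmerCode j = #{y ∈ ((Ioi j).image w)ᶜ | w j < y} := by
  refine card_nbij' w w.symm ?_ ?_ ?_ ?_
  · intro i hi
    simp only [coe_filter, mem_univ, true_and, Set.mem_ofPred_eq, mem_compl, mem_image, mem_Ioi,
      not_exists, not_and, EmbeddingLike.apply_eq_iff_eq] at hi ⊢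
    exact ⟨fun _ hx h => (h ▸ hx).asymm hi.1, hi.2⟩
  · intro y hy
    simp only [coe_filter, mem_compl, mem_image, mem_Ioi, not_exists, not_and, Set.mem_ofPred_eq,
      mem_univ, true_and, apply_symm_apply] at hy ⊢
    refine ⟨lt_of_not_ge fun hle => ?_, hy.2⟩
    rcases hle.eq_or_lt with heq | hlt
    · exact hy.2.ne (by rw [heq, apply_symm_apply])
    · exact hy.1 _ hlt (w.apply_symm_apply y)
  · exact fun i _ => w.symm_apply_apply i
  · exact fun y _ => w.apply_symm_apply y

lemma lehmerCode_injective : Injective (lehmerCode (n := n)) := by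
  intro w w' h
  by_contra hne
  obtain ⟨j, hj, hmax⟩ := (univ.filter fun i => w i ≠ w' i).exists_max_image id
    (by obtain ⟨i, hi⟩ := not_forall.1 (mt Equiv.ext hne); exact ⟨i, by simpa using hi⟩)
  have hagree : (Ioi j).image w = (Ioi j).image w' := image_congr fun i hi => by
    by_contra h'
    exact (mem_Ioi.1 hi).not_ge (hmax i (by simpa using h'))
  have hmem (v : Perm (Fin n)) : v j ∈ ((Ioi j).image v)ᶜ := by
    simp [v.injective.eq_iff]
  have hcode := congrFun h j
  rw [lehmerCode_eq_card, lehmerCode_eq_card, hagree] at hcode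
  exact (mem_filter.1 hj).2 (card_filter_lt_injOn _ (hagree ▸ hmem w) (hmem w') hcode)

lemma exists_lehmerCode_eq (c : Fin n → ℕ) (hc : ∀ j, c j ≤ j) :
    ∃ w : Perm (Fin n), w.lehmerCode = c := by
  let f (w : Perm (Fin n)) (j : Fin n) : Fin (j + 1) :=
    ⟨w.lehmerCode j, Nat.lt_succ_of_le (w.lehmerCode_le j)⟩
  have hf : Bijective f := by
    refine (Fintype.bijective_iff_injective_and_card f).2
      ⟨fun w w' h => lehmerCode_injective ?_, ?_⟩
    · exact funext fun j => congrArg Fin.val (congrFun h j)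
    · simp [Fintype.card_perm, Fintype.card_pi, Fin.prod_univ_eq_prod_range (· + 1),
        prod_range_add_one_eq_factorial]
  obtain ⟨w, hw⟩ := hf.2 fun j => ⟨c j, Nat.lt_succ_of_le (hc j)⟩
  exact ⟨w, funext fun j => congrArg Fin.val (congrFun hw j)⟩

end Equiv.Perm

lemma ncard_artinMonomials (n i : ℕ) :
    (artinMonomials n i).ncard = Fintype.card {w : Equiv.Perm (Fin n) // #w.inversions = i} := by
  let code (w : Equiv.Perm (Fin n)) (j : ℕ) : ℕ := if h : j < n then w.lehmerCode ⟨j, h⟩ else 0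
  have hcode (w : Equiv.Perm (Fin n)) (j : Fin n) : code w j = w.lehmerCode j := dif_pos j.isLt
  have hsum (w : Equiv.Perm (Fin n)) : ∑ j ∈ range n, code w j = #w.inversions := by
    rw [← Fin.sum_univ_eq_sum_range, ← w.sum_lehmerCode]
    exact sum_congr rfl fun j _ => hcode w j
  let f (w : {w : Equiv.Perm (Fin n) // #w.inversions = i}) := artinMonomial n (code w)
  have hrange : artinMonomials n i = Set.range f := by
    ext p
    constructor
    · rintro ⟨c, hc, rfl, rfl⟩
      obtain ⟨w, hw⟩ :=
        Equiv.Perm.exists_lehmerCode_eq (fun j : Fin n => c j) fun j => hc j j.isLt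
      have hwc : ∀ j < n, code w j = c j := fun j hj =>
        (hcode w ⟨j, hj⟩).trans (congrFun hw ⟨j, hj⟩)
      exact ⟨⟨w, by rw [← hsum, sum_congr rfl fun j hj => hwc j (mem_range.1 hj)]⟩,
        artinMonomial_congr hwc⟩
    · rintro ⟨⟨w, rfl⟩, rfl⟩
      exact ⟨code w, fun j hj => (hcode w ⟨j, hj⟩).trans_le (w.lehmerCode_le _), hsum w, rfl⟩
  have hinj : Injective f := fun w w' h => Subtype.ext <| Equiv.Perm.lehmerCode_injective <|
    funext fun j => by rw [← hcode, ← hcode]; exact artinMonomial_inj h j j.isLt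
  rw [hrange, ← Nat.card_coe_set_eq, Nat.card_range_of_injective hinj, Nat.card_eq_fintype_card]

/-- Let `{λ_n}` be a nested sequence of Young diagrams with `|λ_n| = n`, and suppose `λ_N`
has at least `k+1` rows. Then for all `i ≤ k` and `n ≥ N`, the degree-`i` monomials of
`B(λ_n)` are exactly the degree-`i` monomials `x_2^{a_2} ⋯ x_n^{a_n}` with `0 ≤ a_j ≤ j-1`
(the degree-`i` part of `B(col_n)`); in particular their number equals the number of
permutations of `{1,...,n}` with exactly `i` inversions. -/
theorem stmt17 (lam : ℕ → List ℕ) (hpart : ∀ n : ℕ, 1 ≤ n → IsPartitionOf n (lam n))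
    (hnested : ∀ n j : ℕ, (lam n).getD j 0 ≤ (lam (n + 1)).getD j 0)
    (k N : ℕ) (hN : 1 ≤ N) (hrows : k + 1 ≤ (lam N).length) :
    ∀ i : ℕ, i ≤ k → ∀ n : ℕ, N ≤ n →
      ({p ∈ gpBasis (lam n) | p.totalDegree = i} =
        {p : MvPolynomial ℕ ℚ | ∃ a : ℕ → ℕ,
          (∀ j ∈ Finset.Icc 2 n, a j ≤ j - 1) ∧ (∑ j ∈ Finset.Icc 2 n, a j) = i ∧
          p = ∏ j ∈ Finset.Icc 2 n, X j ^ a j}) ∧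
      Set.ncard {p ∈ gpBasis (lam n) | p.totalDegree = i} =
        Fintype.card {w : Equiv.Perm (Fin n) //
          (Finset.univ.filter (fun q : Fin n × Fin n => q.1 < q.2 ∧ w q.2 < w q.1)).card = i} := by
  intro i hi n hn
  have hgrow : (lam N).length ≤ (lam n).length :=
    length_le_length_of_getD_le (hpart N hN).2.1 fun j =>
      Nat.le_induction le_rfl (fun m _ ih => ih.trans (hnested m j)) n hn
  have hdeg := setOf_totalDegree_gpBasis (hpart n (hN.trans hn)) (show i < (lam n).length by omega)
  exact ⟨hdeg.trans (artinMonomials_eq_Icc n i), hdeg ▸ ncard_artinMonomials n i⟩
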